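/- arXiv:2304.08914 — 3 statements merged into one kernel-verified Lean document; each statement's English description precedes it below -/
import Mathlib

section
/- (Welch bound) For any collection of C unit-norm vectors ζ_1, ..., ζ_C in ℝ^d with C > d, the maximal correlation max_{i≠j} |⟨ζ_i, ζ_j⟩| is at least √((C - d)/(d(C - 1))). -/
open scoped RealInnerProductSpace

lemma swap4 {ι κ : Type*} [Fintype ι] [Fintype κ] (g : ι → ι → κ → κ → ℝ) :
    ∑ i, ∑ j, ∑ a, ∑ b, g i j a b = ∑ a, ∑ b, ∑ i, ∑ j, g i j a b :=
  calc ∑ i, ∑ j, ∑ a, ∑ b, g i j a b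
      = ∑ i, ∑ a, ∑ j, ∑ b, g i j a b :=
        Finset.sum_congr rfl fun _ _ => Finset.sum_comm
    _ = ∑ a, ∑ i, ∑ j, ∑ b, g i j a b := Finset.sum_comm
    _ = ∑ a, ∑ i, ∑ b, ∑ j, g i j a b :=
        Finset.sum_congr rfl fun _ _ => Finset.sum_congr rfl fun _ _ => Finset.sum_comm
    _ = ∑ a, ∑ b, ∑ i, ∑ j, g i j a b :=
        Finset.sum_congr rfl fun _ _ => Finset.sum_comm

lemma sum_swap_key {n m : ℕ} (f : Fin n → Fin m → ℝ) :
    ∑ i, ∑ j, (∑ a, f i a * f j a)^2 = ∑ a, ∑ b, (∑ i, f i a * f i b)^2 := by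
  simp only [sq, Finset.sum_mul_sum]
  rw [swap4 (fun i j a b => f i a * f j a * (f i b * f j b))]
  exact Finset.sum_congr rfl fun a _ => Finset.sum_congr rfl fun b _ =>
    Finset.sum_congr rfl fun i _ => Finset.sum_congr rfl fun j _ => by ring

theorem welch_bound (d C : ℕ) (hd : 1 ≤ d) (hC : d < C)
    (ζ : Fin C → EuclideanSpace ℝ (Fin d)) (hnorm : ∀ i, ‖ζ i‖ = 1) :
    ∃ i j : Fin C, i ≠ j ∧
      Real.sqrt ((C - d : ℝ) / (d * (C - 1))) ≤ |⟪ζ i, ζ j⟫| := by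
  have hinner : ∀ i j, ⟪ζ i, ζ j⟫ = ∑ a, ζ i a * ζ j a := by
    intro i j
    simp [PiLp.inner_apply, RCLike.inner_apply, mul_comm]
  have hunit : ∀ i, ∑ a, ζ i a * ζ i a = 1 := by
    intro i
    have := real_inner_self_eq_norm_sq (ζ i)
    rw [hinner i i, hnorm i] at this
    simpa using this
  set S : ℝ := ∑ i, ∑ j, ⟪ζ i, ζ j⟫ ^ 2 with hS
  -- trace identity
  have htr : ∑ a, ∑ i, ζ i a * ζ i a = (C : ℝ) := by
    rw [Finset.sum_comm]
    simp [hunit]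
  -- lower bound on S
  have h1 : (C : ℝ) ^ 2 ≤ d * S := by
    have hcs : (∑ a, ∑ i, ζ i a * ζ i a) ^ 2 ≤
        (d : ℝ) * ∑ a, (∑ i, ζ i a * ζ i a) ^ 2 := by
      simpa using sq_sum_le_card_mul_sum_sq
        (s := (Finset.univ : Finset (Fin d))) (f := fun a => ∑ i, ζ i a * ζ i a)
    have hdiag : ∑ a, (∑ i, ζ i a * ζ i a) ^ 2 ≤
        ∑ a, ∑ b, (∑ i, ζ i a * ζ i b) ^ 2 := by
      refine Finset.sum_le_sum fun a _ => ?_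
      exact Finset.single_le_sum (f := fun b => (∑ i, ζ i a * ζ i b) ^ 2)
        (fun b _ => sq_nonneg _) (Finset.mem_univ a)
    have hSeq : S = ∑ a, ∑ b, (∑ i, ζ i a * ζ i b) ^ 2 := by
      rw [hS]
      simp_rw [hinner]
      exact sum_swap_key (fun i a => ζ i a)
    rw [htr] at hcs
    calc (C : ℝ) ^ 2 ≤ (d : ℝ) * ∑ a, (∑ i, ζ i a * ζ i a) ^ 2 := hcs
      _ ≤ (d : ℝ) * ∑ a, ∑ b, (∑ i, ζ i a * ζ i b) ^ 2 :=
          mul_le_mul_of_nonneg_left hdiag (by positivity)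
      _ = d * S := by rw [hSeq]
  -- off-diagonal set
  set P : Finset (Fin C × Fin C) :=
    Finset.univ.filter (fun p => p.1 ≠ p.2) with hP
  have hC2 : 2 ≤ C := by omega
  have hPne : P.Nonempty := by
    refine ⟨(⟨0, by omega⟩, ⟨1, by omega⟩), ?_⟩
    simp [hP, Fin.ext_iff]
  obtain ⟨p0, hp0, hmax⟩ := P.exists_max_image (fun p => |⟪ζ p.1, ζ p.2⟫|) hPne
  set M : ℝ := |⟪ζ p0.1, ζ p0.2⟫| with hM
  have hM0 : 0 ≤ M := abs_nonneg _
  -- split sum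
  have hsplit : ∑ p ∈ P, ⟪ζ p.1, ζ p.2⟫ ^ 2 +
      ∑ p ∈ Finset.univ.filter (fun p : Fin C × Fin C => ¬ p.1 ≠ p.2),
        ⟪ζ p.1, ζ p.2⟫ ^ 2 = S := by
    rw [hP, Finset.sum_filter_add_sum_filter_not, hS]
    exact Fintype.sum_prod_type (f := fun p : Fin C × Fin C => (⟪ζ p.1, ζ p.2⟫ : ℝ) ^ 2)
  have hdiagsum : ∑ p ∈ Finset.univ.filter (fun p : Fin C × Fin C => ¬ p.1 ≠ p.2),
      ⟪ζ p.1, ζ p.2⟫ ^ 2 = (C : ℝ) := by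
    have hone : ∀ i : Fin C, ⟪ζ i, ζ i⟫ ^ 2 = 1 := by
      intro i; rw [hinner, hunit]; norm_num
    simp only [ne_eq, not_not]
    rw [Finset.sum_filter, Fintype.sum_prod_type]
    simp [Finset.sum_ite_eq, hinner, hunit]
  -- cardinality
  have hcard : (P.card : ℝ) ≤ (C : ℝ) ^ 2 - C := by
    have h2 : (Finset.univ.filter (fun p : Fin C × Fin C => ¬ p.1 ≠ p.2)).card = C := by
      simp only [ne_eq, not_not]
      rw [Finset.card_eq_sum_ones, Finset.sum_filter, Fintype.sum_prod_type]
      simp [Finset.sum_ite_eq]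
    have h3 := Finset.card_filter_add_card_filter_not
      (s := (Finset.univ : Finset (Fin C × Fin C))) (p := fun p => p.1 ≠ p.2)
    simp only [Finset.card_univ, Fintype.card_prod, Fintype.card_fin] at h3
    rw [← hP, h2] at h3
    have h4 : (P.card : ℝ) + C = C * C := by exact_mod_cast h3
    nlinarith [h4]
  -- bound off-diagonal sum
  have hPsum : ∑ p ∈ P, ⟪ζ p.1, ζ p.2⟫ ^ 2 ≤ (P.card : ℝ) * M ^ 2 := by
    have := Finset.sum_le_card_nsmul P (fun p => ⟪ζ p.1, ζ p.2⟫ ^ 2) (M ^ 2)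
      (fun p hp =>
        calc ⟪ζ p.1, ζ p.2⟫ ^ 2 = |⟪ζ p.1, ζ p.2⟫| ^ 2 := (sq_abs _).symm
          _ ≤ M ^ 2 := pow_le_pow_left₀ (abs_nonneg _) (hmax p hp) 2)
    simpa [nsmul_eq_mul] using this
  -- combine
  have hx1 : (1 : ℝ) ≤ (d : ℝ) := by exact_mod_cast hd
  have hxy : (d : ℝ) < C := by exact_mod_cast hC
  have hy0 : (0 : ℝ) < C := by positivity
  have hkey : ((C : ℝ) - d) / (d * (C - 1)) ≤ M ^ 2 := by
    have hfin : (C : ℝ) ^ 2 ≤ d * (((C : ℝ) ^ 2 - C) * M ^ 2 + C) := by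
      have : S ≤ ((C : ℝ) ^ 2 - C) * M ^ 2 + C := by
        rw [← hsplit, hdiagsum]
        have := mul_le_mul_of_nonneg_right hcard (sq_nonneg M)
        nlinarith [hPsum]
      nlinarith [h1]
    have hpos : (0 : ℝ) < d * (C - 1) := by nlinarith
    rw [div_le_iff₀ hpos]
    nlinarith [hfin, hy0, sq_nonneg M]
  refine ⟨p0.1, p0.2, ?_, ?_⟩
  · have := hp0
    rw [hP, Finset.mem_filter] at this
    exact this.2
  · calc Real.sqrt ((C - d : ℝ) / (d * (C - 1))) ≤ Real.sqrt (M ^ 2) :=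
          Real.sqrt_le_sqrt hkey
    _ = M := by rw [Real.sqrt_sq hM0]
end

section
/- Equality in the Welch bound, i.e. max_{i≠j} |⟨ζ_i, ζ_j⟩| = √((C-d)/(d(C-1))), holds only if the frame is equiangular, i.e. |⟨ζ_i, ζ_j⟩| is the same constant for all i ≠ j. -/
/-!
Expanding the squared Gram entries in an orthonormal basis turns `∑ i, ∑ j, ⟪ζ i, ζ j⟫ ^ 2`
into the squared Frobenius norm of the `d × d` frame matrix, whose trace is `C`; Cauchy–Schwarz on
its diagonal gives `C ^ 2 ≤ d * ∑ i, ∑ j, ⟪ζ i, ζ j⟫ ^ 2`. Removing the `C` diagonal terms, the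
`C ^ 2 - C` off-diagonal squares have average at least the squared Welch bound, so if none exceeds
it, all of them equal it.
-/

open scoped RealInnerProductSpace
open Finset Module

noncomputable def welchBound (n d : ℕ) : ℝ := √((n - d) / (d * (n - 1)))

lemma welchBound_nonneg (n d : ℕ) : 0 ≤ welchBound n d := Real.sqrt_nonneg _

lemma welchBound_sq {n d : ℕ} (hdn : d ≤ n) :
    welchBound n d ^ 2 = (n - d) / (d * (n - 1)) := by
  have hdn' : (d : ℝ) ≤ n := by exact_mod_cast hdn
  refine Real.sq_sqrt (div_nonneg (by linarith) ?_)
  rcases Nat.eq_zero_or_pos d with rfl | hd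
  · simp
  · have : (1 : ℝ) ≤ n := by exact_mod_cast hd.trans_le hdn
    exact mul_nonneg d.cast_nonneg (by linarith)

section Frame

variable {ι κ E : Type*} [Fintype ι] [Fintype κ] [NormedAddCommGroup E] [InnerProductSpace ℝ E]

noncomputable def frameMatrix (b : OrthonormalBasis κ ℝ E) (v : ι → E) (k l : κ) : ℝ :=
  ∑ i, ⟪b k, v i⟫ * ⟪b l, v i⟫

lemma sum_frameMatrix_diag (b : OrthonormalBasis κ ℝ E) (v : ι → E) :
    ∑ k, frameMatrix b v k k = ∑ i, ‖v i‖ ^ 2 := by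
  simp only [frameMatrix, ← sq]
  rw [sum_comm]
  exact sum_congr rfl fun i _ => b.sum_sq_inner_right (v i)

lemma sum_sq_frameMatrix (b : OrthonormalBasis κ ℝ E) (v : ι → E) :
    ∑ k, ∑ l, frameMatrix b v k l ^ 2 = ∑ i, ∑ j, ⟪v i, v j⟫ ^ 2 := by
  have expand : ∀ i j, ⟪v i, v j⟫ ^ 2 =
      ∑ k, ∑ l, (⟪b k, v i⟫ * ⟪b l, v i⟫) * (⟪b k, v j⟫ * ⟪b l, v j⟫) := by
    intro i j
    rw [← b.sum_inner_mul_inner, sq, sum_mul_sum]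
    refine sum_congr rfl fun k _ => sum_congr rfl fun l _ => ?_
    rw [real_inner_comm (v i) (b k), real_inner_comm (v i) (b l)]
    ring
  simp only [expand, frameMatrix, sq, sum_mul_sum]
  calc _ = ∑ k, ∑ i, ∑ j, ∑ l, (⟪b k, v i⟫ * ⟪b l, v i⟫) * (⟪b k, v j⟫ * ⟪b l, v j⟫) :=
        sum_congr rfl fun k _ => by rw [sum_comm]; exact sum_congr rfl fun i _ => sum_comm
    _ = _ := by rw [sum_comm]; exact sum_congr rfl fun i _ => sum_comm

theorem sq_sum_norm_sq_le_finrank_mul_sum_sq_inner [FiniteDimensional ℝ E] (v : ι → E) :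
    (∑ i, ‖v i‖ ^ 2) ^ 2 ≤ finrank ℝ E * ∑ i, ∑ j, ⟪v i, v j⟫ ^ 2 := by
  set b := stdOrthonormalBasis ℝ E
  set F := frameMatrix b v
  calc (∑ i, ‖v i‖ ^ 2) ^ 2 = (∑ k, F k k) ^ 2 := by rw [sum_frameMatrix_diag]
    _ ≤ finrank ℝ E * ∑ k, F k k ^ 2 := by
      simpa using sq_sum_le_card_mul_sum_sq (s := univ) (f := fun k => F k k)
    _ ≤ finrank ℝ E * ∑ k, ∑ l, F k l ^ 2 := by
      gcongr with k
      exact single_le_sum (f := fun l => F k l ^ 2) (fun l _ => sq_nonneg _) (mem_univ k)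
    _ = finrank ℝ E * ∑ i, ∑ j, ⟪v i, v j⟫ ^ 2 := by rw [sum_sq_frameMatrix]

end Frame

section UnitVectors

variable {ι E : Type*} [Fintype ι] [DecidableEq ι] [NormedAddCommGroup E] [InnerProductSpace ℝ E]
  {v : ι → E}

lemma sum_sq_inner_eq_card_add_sum_offDiag (hv : ∀ i, ‖v i‖ = 1) :
    ∑ i, ∑ j, ⟪v i, v j⟫ ^ 2 = Fintype.card ι + ∑ p ∈ univ.offDiag, ⟪v p.1, v p.2⟫ ^ 2 := by
  rw [← sum_product' (f := fun i j => ⟪v i, v j⟫ ^ 2), ← diag_union_offDiag,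
    sum_union (disjoint_diag_offDiag _), sum_diag]
  simp [hv]

theorem abs_inner_eq_welchBound [FiniteDimensional ℝ E] (hn : 2 ≤ Fintype.card ι)
    (hdn : finrank ℝ E ≤ Fintype.card ι) (hv : ∀ i, ‖v i‖ = 1)
    (hle : ∀ i j, i ≠ j → |⟪v i, v j⟫| ≤ welchBound (Fintype.card ι) (finrank ℝ E))
    {i j : ι} (hij : i ≠ j) :
    |⟪v i, v j⟫| = welchBound (Fintype.card ι) (finrank ℝ E) := by
  set n := Fintype.card ι
  set d := finrank ℝ E
  have hd : (0 : ℝ) < d := by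
    have : Nontrivial E := ⟨⟨v i, 0, by simp [← norm_ne_zero_iff, hv]⟩⟩
    exact_mod_cast finrank_pos
  have hn' : (2 : ℝ) ≤ n := by exact_mod_cast hn
  set w := welchBound n d
  have hsq_le : ∀ p ∈ (univ : Finset ι).offDiag, ⟪v p.1, v p.2⟫ ^ 2 ≤ w ^ 2 := fun p hp => by
    rw [← sq_abs]
    exact pow_le_pow_left₀ (abs_nonneg _) (hle _ _ (mem_offDiag.1 hp).2.2) 2
  have hsum :
      ∑ _p ∈ (univ : Finset ι).offDiag, w ^ 2 ≤ ∑ p ∈ univ.offDiag, ⟪v p.1, v p.2⟫ ^ 2 := by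
    have welch := sq_sum_norm_sq_le_finrank_mul_sum_sq_inner v
    simp only [hv, one_pow, sum_const, card_univ, nsmul_eq_mul, mul_one,
      sum_sq_inner_eq_card_add_sum_offDiag hv] at welch
    rw [sum_const, offDiag_card, nsmul_eq_mul, welchBound_sq hdn, card_univ,
      Nat.cast_sub (Nat.le_mul_self n), Nat.cast_mul,
      show ((n : ℝ) * n - n) * ((n - d) / (d * (n - 1))) = n * (n - d) / d by
        field_simp [show (n : ℝ) - 1 ≠ 0 by linarith],
      div_le_iff₀ hd]
    nlinarith
  have hall := (sum_eq_sum_iff_of_le hsq_le).1 (le_antisymm (sum_le_sum hsq_le) hsum)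
  rw [← sq_eq_sq₀ (abs_nonneg _) (welchBound_nonneg _ _), sq_abs]
  exact hall (i, j) (by simp [hij])

end UnitVectors

theorem welch_equality_only_if_equiangular_general (d C : ℕ) (hdC : d ≤ C)
    (hC : 2 ≤ C)
    (ζ : Fin C → EuclideanSpace ℝ (Fin d)) (hnorm : ∀ i, ‖ζ i‖ = 1)
    (hub : ∀ i j : Fin C, i ≠ j →
      |⟪ζ i, ζ j⟫| ≤ Real.sqrt ((C - d : ℝ) / (d * (C - 1)))) :
    ∃ c : ℝ, ∀ i j : Fin C, i ≠ j → |⟪ζ i, ζ j⟫| = c := by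
  have hcard : Fintype.card (Fin C) = C := Fintype.card_fin C
  have hrank : finrank ℝ (EuclideanSpace ℝ (Fin d)) = d := finrank_euclideanSpace_fin
  refine ⟨welchBound C d, fun i j hij => ?_⟩
  have key := abs_inner_eq_welchBound (v := ζ) (by rwa [hcard]) (by rwa [hcard, hrank]) hnorm
    (by rwa [hcard, hrank]) hij
  rwa [hcard, hrank] at key

theorem welch_equality_only_if_equiangular (d C : ℕ) (hd : 1 ≤ d) (hdC : d ≤ C)
    (hC : 2 ≤ C)
    (ζ : Fin C → EuclideanSpace ℝ (Fin d)) (hnorm : ∀ i, ‖ζ i‖ = 1)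
    (hub : ∀ i j : Fin C, i ≠ j →
      |⟪ζ i, ζ j⟫| ≤ Real.sqrt ((C - d : ℝ) / (d * (C - 1))))
    (hattained : ∃ i j : Fin C, i ≠ j ∧
      |⟪ζ i, ζ j⟫| = Real.sqrt ((C - d : ℝ) / (d * (C - 1)))) :
    ∃ c : ℝ, ∀ i j : Fin C, i ≠ j → |⟪ζ i, ζ j⟫| = c :=
  welch_equality_only_if_equiangular_general d C hdC hC ζ hnorm hub
end

section
/- The softmax function on ℝ^C, defined by Softmax(x)_i = e^{x_i} / Σ_j e^{x_j}, is Lipschitz continuous with Lipschitz constant √(C/2) with respect to the Euclidean norm. -/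
/-! Along the segment from `y` to `x` the `i`-th softmax coordinate has derivative
`sᵢ (dᵢ - ⟪s, d⟫) = ⟪sᵢ (eᵢ - s), d⟫`, where `s` is the current softmax vector and `d = x - y`.
As `s` is a probability vector, `‖sᵢ (eᵢ - s)‖² = sᵢ² (1 - 2 sᵢ + ‖s‖²) ≤ 2 sᵢ² (1 - sᵢ) ≤ 1/2`,
so by the mean value theorem every coordinate is `1/√2`-Lipschitz; summing the `C` squared
coordinate bounds gives the constant `√(C/2)`. -/

open Finset Real

section ProbabilityVector

variable {ι : Type*} [Fintype ι] {s : ι → ℝ}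

lemma sum_sq_single_sub_le [DecidableEq ι] (hs : ∀ j, 0 ≤ s j) (hsum : ∑ j, s j = 1)
    (i : ι) :
    ∑ j, (Pi.single i 1 - s : ι → ℝ) j ^ 2 ≤ 2 * (1 - s i) := by
  have hle : ∀ j, s j ≤ 1 := fun j =>
    hsum ▸ single_le_sum (fun k _ => hs k) (mem_univ j)
  have hsq : ∑ j, s j ^ 2 ≤ 1 :=
    hsum ▸ sum_le_sum fun j _ => by nlinarith [hs j, hle j]
  have hexpand : ∑ j, (Pi.single i 1 - s : ι → ℝ) j ^ 2 = 1 - 2 * s i + ∑ j, s j ^ 2 := by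
    simp only [Pi.sub_apply, sub_sq, sum_add_distrib, sum_sub_distrib]
    simp [Pi.single_apply]
  linarith

lemma sq_mul_sub_sum_mul_le (hs : ∀ j, 0 ≤ s j) (hsum : ∑ j, s j = 1)
    (d : ι → ℝ) (i : ι) :
    (s i * (d i - ∑ j, s j * d j)) ^ 2 ≤ (∑ j, d j ^ 2) / 2 := by
  classical
  have hinner : d i - ∑ j, s j * d j = ∑ j, (Pi.single i 1 - s : ι → ℝ) j * d j := by
    simp [sub_mul, Pi.single_apply]
  have hd : 0 ≤ ∑ j, d j ^ 2 := sum_nonneg fun j _ => sq_nonneg _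
  have hle : s i ≤ 1 := hsum ▸ single_le_sum (fun k _ => hs k) (mem_univ i)
  have hpoly : s i ^ 2 * (2 * (1 - s i)) ≤ 1 / 2 := by
    nlinarith [mul_nonneg (hs i) (sub_nonneg.2 hle), sq_nonneg (2 * s i - 1)]
  calc (s i * (d i - ∑ j, s j * d j)) ^ 2
      = s i ^ 2 * (∑ j, (Pi.single i 1 - s : ι → ℝ) j * d j) ^ 2 := by rw [hinner, mul_pow]
    _ ≤ s i ^ 2 * ((2 * (1 - s i)) * ∑ j, d j ^ 2) := by
        gcongr
        exact (sum_mul_sq_le_sq_mul_sq _ _ _).trans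
          (by gcongr; exact sum_sq_single_sub_le hs hsum i)
    _ ≤ 1 / 2 * ∑ j, d j ^ 2 := by rw [← mul_assoc]; gcongr
    _ = (∑ j, d j ^ 2) / 2 := by ring

end ProbabilityVector

section Softmax

variable {ι : Type*} [Fintype ι]

noncomputable def softmax (x : ι → ℝ) (i : ι) : ℝ := exp (x i) / ∑ j, exp (x j)

lemma softmax_nonneg (x : ι → ℝ) (i : ι) : 0 ≤ softmax x i :=
  div_nonneg (exp_pos _).le (sum_nonneg fun _ _ => (exp_pos _).le)

lemma sum_exp_pos [Nonempty ι] (x : ι → ℝ) : 0 < ∑ j, exp (x j) :=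
  sum_pos (fun _ _ => exp_pos _) univ_nonempty

lemma sum_softmax [Nonempty ι] (x : ι → ℝ) : ∑ i, softmax x i = 1 := by
  simp only [softmax, ← sum_div, div_self (sum_exp_pos x).ne']

lemma hasDerivAt_softmax_add_smul (x d : ι → ℝ) (i : ι) (t : ℝ) :
    HasDerivAt (fun t : ℝ => softmax (x + t • d) i)
      (softmax (x + t • d) i * (d i - ∑ j, softmax (x + t • d) j * d j)) t := by
  have : Nonempty ι := ⟨i⟩
  have hexp (j : ι) : HasDerivAt (fun t : ℝ => exp ((x + t • d) j))
      (exp ((x + t • d) j) * d j) t := by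
    simpa using (((hasDerivAt_id t).mul_const (d j)).const_add (x j)).exp
  have hpos := (sum_exp_pos (x + t • d)).ne'
  refine ((hexp i).fun_div (HasDerivAt.fun_sum fun j _ => hexp j) hpos).congr_deriv ?_
  simp only [softmax, div_mul_eq_mul_div, ← sum_div]
  field_simp

lemma sq_softmax_sub_softmax_le (x y : ι → ℝ) (i : ι) :
    (softmax x i - softmax y i) ^ 2 ≤ (∑ j, (x j - y j) ^ 2) / 2 := by
  have : Nonempty ι := ⟨i⟩
  set B := (∑ j, (x j - y j) ^ 2) / 2
  have hB : 0 ≤ B := by positivity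
  have hmvt :
      ‖softmax (y + (1 : ℝ) • (x - y)) i - softmax (y + (0 : ℝ) • (x - y)) i‖ ≤ √B := by
    refine norm_image_sub_le_of_norm_deriv_le_segment_01'
      (fun t _ => (hasDerivAt_softmax_add_smul y (x - y) i t).hasDerivWithinAt) fun t _ => ?_
    exact abs_le_sqrt (sq_mul_sub_sum_mul_le (softmax_nonneg _) (sum_softmax _) (x - y) i)
  simp only [one_smul, zero_smul, add_zero, add_sub_cancel, norm_eq_abs] at hmvt
  exact (Real.sq_le hB).2 (abs_le.1 hmvt)

lemma sum_sq_softmax_sub_softmax_le (x y : ι → ℝ) :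
    ∑ i, (softmax x i - softmax y i) ^ 2 ≤ Fintype.card ι / 2 * ∑ j, (x j - y j) ^ 2 := by
  calc ∑ i, (softmax x i - softmax y i) ^ 2
      ≤ ∑ _i : ι, (∑ j, (x j - y j) ^ 2) / 2 :=
        sum_le_sum fun i _ => sq_softmax_sub_softmax_le x y i
    _ = Fintype.card ι / 2 * ∑ j, (x j - y j) ^ 2 := by
        simp only [sum_const, card_univ, nsmul_eq_mul]; ring

end Softmax

theorem softmax_lipschitz (C : ℕ)
    (S : (Fin C → ℝ) → (Fin C → ℝ))
    (hS : ∀ x i, S x i = Real.exp (x i) / ∑ j, Real.exp (x j)) :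
    ∀ x y : Fin C → ℝ,
      Real.sqrt (∑ i, (S x i - S y i) ^ 2)
        ≤ Real.sqrt ((C : ℝ) / 2) * Real.sqrt (∑ i, (x i - y i) ^ 2) := by
  obtain rfl : S = softmax := funext₂ hS
  intro x y
  rw [← sqrt_mul (by positivity)]
  simpa using sqrt_le_sqrt (sum_sq_softmax_sub_softmax_le x y)
end
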